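/- For spin s = 3/2 with a₁+a₂+a₃ = 0, the 4×4 quantum top matrix H_{3/2} has characteristic polynomial (λ² - (3/2)(a₁²+a₂²+a₃²))², i.e. its eigenvalues are ±√((3/2)(a₁²+a₂²+a₃²)), each with multiplicity 2. In particular tr(H_{3/2}ᵏ) = 0 for every odd k. -/
import Mathlib


/-- Quantum top matrix for spin `s = 3/2`, indexed by `j ∈ {-3/2,-1/2,1/2,3/2}`
(index `i : Fin 4` corresponds to `j = i - 3/2`). -/
noncomputable def H32 (a1 a2 a3 : ℝ) : Matrix (Fin 4) (Fin 4) ℝ :=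
  Matrix.of fun i i' =>
    let j : ℝ := (i : ℕ) - 3 / 2
    let j' : ℝ := (i' : ℕ) - 3 / 2
    if i = i' then (a1 + a2) / 2 * ((3 / 2 : ℝ) * (3 / 2 + 1) - j ^ 2) + a3 * j ^ 2
    else if (i' : ℕ) = (i : ℕ) + 2 then
      (a1 - a2) / 4 *
        Real.sqrt ((3 / 2 - j) * (3 / 2 - j - 1) * (3 / 2 + j + 1) * (3 / 2 + j + 2))
    else if (i : ℕ) = (i' : ℕ) + 2 then
      (a1 - a2) / 4 *
        Real.sqrt ((3 / 2 - j') * (3 / 2 - j' - 1) * (3 / 2 + j' + 1) * (3 / 2 + j' + 2))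
    else 0

open Polynomial in
private lemma H32_charpoly_aux (a1 a2 : ℝ) :
    (H32 a1 a2 (-a1 - a2)).charpoly
      = (X ^ 2 - C (3 / 2 * (a1 ^ 2 + a2 ^ 2 + (-a1 - a2) ^ 2))) ^ 2 := by
  have hs : Real.sqrt 12 ^ 2 = 12 := Real.sq_sqrt (by norm_num)
  rw [Matrix.charpoly]
  simp only [Matrix.det_succ_row_zero, Fin.sum_univ_succ, Matrix.det_fin_one, Matrix.submatrix_apply, Fin.succ_zero_eq_one, Fin.succ_one_eq_two, Finset.univ_unique, Finset.sum_singleton, Fin.default_eq_zero, Fin.succAbove_zero, Function.comp_apply, Fin.val_succ, Fin.coe_castSucc, show ((0:Fin 3).succ = (1:Fin 4)) from rfl, show ((1:Fin 3).succ = (2:Fin 4)) from rfl,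
    show ((2:Fin 3).succ = (3:Fin 4)) from rfl, show ((0:Fin 2).succ = (1:Fin 3)) from rfl,
    show ((1:Fin 2).succ = (2:Fin 3)) from rfl, show ((0:Fin 1).succ = (1:Fin 2)) from rfl,
    show ((0:Fin 3).castSucc = (0:Fin 4)) from rfl, show ((1:Fin 3).castSucc = (1:Fin 4)) from rfl,
    show ((2:Fin 3).castSucc = (2:Fin 4)) from rfl, show ((0:Fin 2).castSucc = (0:Fin 3)) from rfl,
    show ((1:Fin 2).castSucc = (1:Fin 3)) from rfl, show ((0:Fin 1).castSucc = (0:Fin 2)) from rfl,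
    show (Fin.succAbove (0:Fin 4) (0:Fin 3) = (1:Fin 4)) from rfl,
    show (Fin.succAbove (0:Fin 4) (1:Fin 3) = (2:Fin 4)) from rfl,
    show (Fin.succAbove (0:Fin 4) (2:Fin 3) = (3:Fin 4)) from rfl,
    show (Fin.succAbove (1:Fin 4) (0:Fin 3) = (0:Fin 4)) from rfl,
    show (Fin.succAbove (1:Fin 4) (1:Fin 3) = (2:Fin 4)) from rfl,
    show (Fin.succAbove (1:Fin 4) (2:Fin 3) = (3:Fin 4)) from rfl,
    show (Fin.succAbove (2:Fin 4) (0:Fin 3) = (0:Fin 4)) from rfl,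
    show (Fin.succAbove (2:Fin 4) (1:Fin 3) = (1:Fin 4)) from rfl,
    show (Fin.succAbove (2:Fin 4) (2:Fin 3) = (3:Fin 4)) from rfl,
    show (Fin.succAbove (3:Fin 4) (0:Fin 3) = (0:Fin 4)) from rfl,
    show (Fin.succAbove (3:Fin 4) (1:Fin 3) = (1:Fin 4)) from rfl,
    show (Fin.succAbove (3:Fin 4) (2:Fin 3) = (2:Fin 4)) from rfl,
    show (Fin.succAbove (0:Fin 3) (0:Fin 2) = (1:Fin 3)) from rfl,
    show (Fin.succAbove (0:Fin 3) (1:Fin 2) = (2:Fin 3)) from rfl,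
    show (Fin.succAbove (1:Fin 3) (0:Fin 2) = (0:Fin 3)) from rfl,
    show (Fin.succAbove (1:Fin 3) (1:Fin 2) = (2:Fin 3)) from rfl,
    show (Fin.succAbove (2:Fin 3) (0:Fin 2) = (0:Fin 3)) from rfl,
    show (Fin.succAbove (2:Fin 3) (1:Fin 2) = (1:Fin 3)) from rfl,
    show (Fin.succAbove (0:Fin 2) (0:Fin 1) = (1:Fin 2)) from rfl,
    show (Fin.succAbove (1:Fin 2) (0:Fin 1) = (0:Fin 2)) from rfl]
  simp only [Matrix.charmatrix_apply_eq,
    Matrix.charmatrix_apply_ne _ _ _ (by decide : (0:Fin 4) ≠ 1),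
    Matrix.charmatrix_apply_ne _ _ _ (by decide : (0:Fin 4) ≠ 2),
    Matrix.charmatrix_apply_ne _ _ _ (by decide : (0:Fin 4) ≠ 3),
    Matrix.charmatrix_apply_ne _ _ _ (by decide : (1:Fin 4) ≠ 0),
    Matrix.charmatrix_apply_ne _ _ _ (by decide : (1:Fin 4) ≠ 2),
    Matrix.charmatrix_apply_ne _ _ _ (by decide : (1:Fin 4) ≠ 3),
    Matrix.charmatrix_apply_ne _ _ _ (by decide : (2:Fin 4) ≠ 0),
    Matrix.charmatrix_apply_ne _ _ _ (by decide : (2:Fin 4) ≠ 1),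
    Matrix.charmatrix_apply_ne _ _ _ (by decide : (2:Fin 4) ≠ 3),
    Matrix.charmatrix_apply_ne _ _ _ (by decide : (3:Fin 4) ≠ 0),
    Matrix.charmatrix_apply_ne _ _ _ (by decide : (3:Fin 4) ≠ 1),
    Matrix.charmatrix_apply_ne _ _ _ (by decide : (3:Fin 4) ≠ 2)]
  norm_num [H32, Matrix.of_apply,
    show ((0:Fin 4):ℕ) = 0 from rfl, show ((1:Fin 4):ℕ) = 1 from rfl,
    show ((2:Fin 4):ℕ) = 2 from rfl, show ((3:Fin 4):ℕ) = 3 from rfl,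
    show (0:Fin 4) ≠ 1 from by decide, show (0:Fin 4) ≠ 2 from by decide,
    show (0:Fin 4) ≠ 3 from by decide, show (1:Fin 4) ≠ 0 from by decide,
    show (1:Fin 4) ≠ 2 from by decide, show (1:Fin 4) ≠ 3 from by decide,
    show (2:Fin 4) ≠ 0 from by decide, show (2:Fin 4) ≠ 1 from by decide,
    show (2:Fin 4) ≠ 3 from by decide, show (3:Fin 4) ≠ 0 from by decide,
    show (3:Fin 4) ≠ 1 from by decide, show (3:Fin 4) ≠ 2 from by decide]
  apply Polynomial.funext
  intro x
  simp only [eval_mul, eval_add, eval_sub, eval_neg, eval_pow, eval_X, eval_C, eval_ofNat]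
  linear_combination (((a1-a2)/4)^2*(((a1-a2)/4)^2*Real.sqrt 12^2 + ((a1-a2)/4)^2*12
    - 2*(x+3*(a1+a2)/2)*(x-3*(a1+a2)/2))) * hs

set_option maxHeartbeats 1600000 in
private lemma H32_sq (a1 a2 : ℝ) :
    (H32 a1 a2 (-a1 - a2)) ^ 2
      = (3 * (a1 ^ 2 + a2 ^ 2 + a1 * a2)) • (1 : Matrix (Fin 4) (Fin 4) ℝ) := by
  have hs : Real.sqrt 12 ^ 2 = 12 := Real.sq_sqrt (by norm_num)
  ext i j
  rw [pow_two, Matrix.mul_apply, Fin.sum_univ_four]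
  fin_cases i <;> fin_cases j <;>
    norm_num [H32, Matrix.of_apply, Matrix.smul_apply, Matrix.one_apply, Fin.ext_iff,
      show ((0:Fin 4):ℕ) = 0 from rfl, show ((1:Fin 4):ℕ) = 1 from rfl,
      show ((2:Fin 4):ℕ) = 2 from rfl, show ((3:Fin 4):ℕ) = 3 from rfl]
  all_goals try ring
  all_goals linear_combination ((a1 - a2) / 4) ^ 2 * hs

private lemma H32_trace (a1 a2 : ℝ) :
    Matrix.trace (H32 a1 a2 (-a1 - a2)) = 0 := by
  simp [Matrix.trace, Matrix.diag, Fin.sum_univ_four, H32,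
    show ((0:Fin 4):ℕ) = 0 from rfl, show ((1:Fin 4):ℕ) = 1 from rfl,
    show ((2:Fin 4):ℕ) = 2 from rfl, show ((3:Fin 4):ℕ) = 3 from rfl]
  ring

open Polynomial in
/-- For spin `3/2` with `a₁+a₂+a₃ = 0`, the characteristic polynomial is
`(λ² - (3/2)(a₁²+a₂²+a₃²))²`; in particular all odd-power traces vanish. -/
theorem H32_charpoly (a1 a2 a3 : ℝ) (h : a1 + a2 + a3 = 0) :
    (H32 a1 a2 a3).charpoly = (X ^ 2 - C (3 / 2 * (a1 ^ 2 + a2 ^ 2 + a3 ^ 2))) ^ 2 ∧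
    ∀ k : ℕ, Odd k → Matrix.trace ((H32 a1 a2 a3) ^ k) = 0 := by
  have ha3 : a3 = -a1 - a2 := by linarith
  subst ha3
  refine ⟨H32_charpoly_aux a1 a2, ?_⟩
  intro k hk
  obtain ⟨m, rfl⟩ := hk
  have hpow : (H32 a1 a2 (-a1 - a2)) ^ (2 * m + 1)
      = (3 * (a1 ^ 2 + a2 ^ 2 + a1 * a2)) ^ m • (H32 a1 a2 (-a1 - a2)) := by
    rw [pow_succ, pow_mul, H32_sq, _root_.smul_pow, one_pow, Matrix.smul_mul, Matrix.one_mul]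
  rw [hpow, Matrix.trace_smul, H32_trace, smul_zero]
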